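/- Let γ : [a,b] → ℝ^n be a C^{1,1} curve satisfying ‖γ''(t)‖ ≤ C·‖γ'(t)‖² for almost all t, where C > 0. Then for all t in [a,b], ‖γ'(t)‖ ≤ (e^{Cr} − 1)/(C·(b−a)), where r = ∫_a^b ‖γ'(t)‖ dt is the Euclidean length of γ. -/

import Mathlib

/-!
Let `v = ‖γ'‖`. Since the norm is 1-Lipschitz, `|v'| ≤ ‖γ''‖ ≤ C v²` a.e., so the reciprocal
`1 / v` is `C`-Lipschitz (for the absolutely continuous function `1 / (v + ε)` this is the
fundamental theorem of calculus). Hence `v s ≥ k / (1 + C k |s - t|)` with `k = v t`, and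
integrating over `[a, b]` gives `C r ≥ log (1 + C k (t - a)) + log (1 + C k (b - t))
≥ log (1 + C k (b - a))`, which is the claimed bound on `k`.
-/

open MeasureTheory Set Filter Topology Real
open scoped NNReal

theorem LipschitzWith.norm_deriv_comp_le {E F : Type*} [NormedAddCommGroup E] [NormedSpace ℝ E]
    [NormedAddCommGroup F] [NormedSpace ℝ F] {φ : E → F} {K : ℝ≥0} (hφ : LipschitzWith K φ)
    {f : ℝ → E} {f' : E} {x : ℝ} (hf : HasDerivAt f f' x) :
    ‖deriv (fun t => φ (f t)) x‖ ≤ K * ‖f'‖ := by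
  by_cases hd : DifferentiableAt ℝ (fun t => φ (f t)) x
  · have hslope_le : ∀ y, ‖slope (fun t => φ (f t)) x y‖ ≤ K * ‖slope f x y‖ := fun y => by
      simp only [slope_def_module, norm_smul]
      rw [mul_left_comm]
      exact mul_le_mul_of_nonneg_left (hφ.norm_sub_le _ _) (norm_nonneg _)
    exact le_of_tendsto_of_tendsto
      (hasDerivAt_iff_tendsto_slope.1 hd.hasDerivAt).norm
      ((hasDerivAt_iff_tendsto_slope.1 hf).norm.const_mul _) (.of_forall hslope_le)
  · rw [deriv_zero_of_not_differentiableAt hd, norm_zero]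
    positivity

theorem LipschitzOnWith.inv₀ {α : Type*} [PseudoMetricSpace α] {f : α → ℝ} {s : Set α}
    {K ε : ℝ≥0} (hf : LipschitzOnWith K f s) (hε : 0 < ε) (hfε : ∀ x ∈ s, ε ≤ f x) :
    LipschitzOnWith (K / ε ^ 2) (fun x => (f x)⁻¹) s := by
  refine LipschitzOnWith.of_dist_le_mul fun x hx y hy => ?_
  have hε' : (0 : ℝ) < ε := hε
  have hfx : 0 < f x := hε'.trans_le (hfε x hx)
  have hfy : 0 < f y := hε'.trans_le (hfε y hy)
  rw [Real.dist_eq, inv_sub_inv hfx.ne' hfy.ne', abs_div, abs_of_pos (mul_pos hfx hfy),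
    div_le_iff₀ (mul_pos hfx hfy), NNReal.coe_div, NNReal.coe_pow, abs_sub_comm, ← Real.dist_eq]
  calc dist (f x) (f y) ≤ K * dist x y := hf.dist_le_mul x hx y hy
    _ = K / ε ^ 2 * dist x y * (ε * ε) := by field_simp
    _ ≤ K / ε ^ 2 * dist x y * (f x * f y) := by gcongr <;> exact hfε _ ‹_›

theorem AbsolutelyContinuousOnInterval.abs_sub_le_of_ae_abs_deriv_le {f : ℝ → ℝ} {a b B : ℝ}
    (hf : AbsolutelyContinuousOnInterval f a b) (hB : ∀ᵐ x, x ∈ uIcc a b → |deriv f x| ≤ B) :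
    |f b - f a| ≤ B * |b - a| := by
  rw [← hf.integral_deriv_eq_sub, ← Real.norm_eq_abs]
  exact intervalIntegral.norm_integral_le_of_norm_le_const_ae
    (hB.mono fun x hx hx' => hx (uIoc_subset_uIcc hx'))

theorem abs_inv_sub_inv_le_of_abs_deriv_le_mul_sq {w : ℝ → ℝ} {K : ℝ≥0} {C x y : ℝ}
    (hw : LipschitzOnWith K w (uIcc x y)) (hpos : ∀ s ∈ uIcc x y, 0 < w s)
    (hd : ∀ᵐ s, s ∈ uIcc x y → |deriv w s| ≤ C * w s ^ 2) :
    |(w y)⁻¹ - (w x)⁻¹| ≤ C * |y - x| := by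
  obtain ⟨m, hm, hmin⟩ := isCompact_uIcc.exists_isMinOn nonempty_uIcc hw.continuousOn
  have hinv : LipschitzOnWith _ (fun s => (w s)⁻¹) (uIcc x y) :=
    hw.inv₀ (ε := ⟨w m, (hpos m hm).le⟩) (hpos m hm) fun s hs => hmin hs
  refine hinv.absolutelyContinuousOnInterval.abs_sub_le_of_ae_abs_deriv_le ?_
  filter_upwards [hd, hw.absolutelyContinuousOnInterval.ae_differentiableAt] with s hds hdiff hs
  have hws := hpos s hs
  rw [((hdiff hs).hasDerivAt.fun_inv hws.ne').deriv, abs_div, abs_neg,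
    abs_of_pos (pow_pos hws 2), div_le_iff₀ (pow_pos hws 2)]
  exact hds hs

theorem le_mul_one_add_mul_of_abs_deriv_le_mul_sq {v : ℝ → ℝ} {K : ℝ≥0} {C x y : ℝ}
    (hC : 0 ≤ C) (hv : LipschitzOnWith K v (uIcc x y)) (hv0 : ∀ s ∈ uIcc x y, 0 ≤ v s)
    (hd : ∀ᵐ s, s ∈ uIcc x y → |deriv v s| ≤ C * v s ^ 2) :
    v x ≤ v y * (1 + C * v x * |y - x|) := by
  -- `v` may vanish, so compare `v + ε`, whose reciprocal is Lipschitz, and let `ε → 0`.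
  have hshift : ∀ ε > 0, v x + ε ≤ (v y + ε) * (1 + C * (v x + ε) * |y - x|) := by
    intro ε hε
    have hinv := abs_inv_sub_inv_le_of_abs_deriv_le_mul_sq
      (hv.add (LipschitzWith.const ε).lipschitzOnWith) (fun s hs => by linarith [hv0 s hs]) (by
        filter_upwards [hd] with s hds hs
        rw [deriv_add_const]
        exact (hds hs).trans (by gcongr <;> linarith [hv0 s hs]))
    have hx : 0 < v x + ε := by linarith [hv0 x left_mem_uIcc]
    have hy : 0 < v y + ε := by linarith [hv0 y right_mem_uIcc]
    have hprod : (v x + ε) * (v y + ε) * ((v y + ε)⁻¹ - (v x + ε)⁻¹) = v x + ε - (v y + ε) := by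
      field_simp
    have hscaled := mul_le_mul_of_nonneg_left (abs_le.1 hinv).2 (mul_pos hx hy).le
    nlinarith
  have hlim : Tendsto (fun ε => (v y + ε) * (1 + C * (v x + ε) * |y - x|) - ε) (𝓝[>] 0)
      (𝓝 (v y * (1 + C * v x * |y - x|))) := by
    have hcont : Continuous fun ε => (v y + ε) * (1 + C * (v x + ε) * |y - x|) - ε := by fun_prop
    simpa using (hcont.tendsto 0).mono_left nhdsWithin_le_nhds
  exact ge_of_tendsto hlim (eventually_nhdsWithin_of_forall fun ε hε' => by
    linarith [hshift ε hε'])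

theorem integral_div_one_add_mul {m L : ℝ} (hm : 0 ≤ m) (hL : 0 ≤ L) :
    ∫ s in 0..L, m / (1 + m * s) = log (1 + m * L) := by
  have hpos : ∀ s ∈ uIcc 0 L, 0 < 1 + m * s := fun s hs => by
    rw [uIcc_of_le hL] at hs
    nlinarith [hs.1]
  have hderiv : ∀ s ∈ uIcc 0 L, HasDerivAt (fun s => log (1 + m * s)) (m / (1 + m * s)) s :=
    fun s hs => by simpa using (((hasDerivAt_id s).const_mul m).const_add 1).log (hpos s hs).ne'
  have hcont : ContinuousOn (fun s => m / (1 + m * s)) (uIcc 0 L) :=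
    continuousOn_const.div (by fun_prop) fun s hs => (hpos s hs).ne'
  rw [intervalIntegral.integral_eq_sub_of_hasDerivAt hderiv hcont.intervalIntegrable]
  simp

theorem integral_div_one_add_mul_abs_sub {m a b t : ℝ} (hm : 0 ≤ m) (ht : t ∈ Icc a b) :
    ∫ s in a..b, m / (1 + m * |s - t|) = log (1 + m * (t - a)) + log (1 + m * (b - t)) := by
  have hcont : Continuous fun s => m / (1 + m * |s - t|) :=
    continuous_const.div (by fun_prop) fun s => by positivity
  rw [← intervalIntegral.integral_add_adjacent_intervals (hcont.intervalIntegrable a t)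
    (hcont.intervalIntegrable t b)]
  congr 1
  · calc ∫ s in a..t, m / (1 + m * |s - t|) = ∫ s in a..t, m / (1 + m * (t - s)) := by
          refine intervalIntegral.integral_congr fun s hs => ?_
          rw [uIcc_of_le ht.1] at hs
          rw [abs_of_nonpos (by linarith [hs.2]), neg_sub]
      _ = log (1 + m * (t - a)) := by
          rw [intervalIntegral.integral_comp_sub_left (fun s => m / (1 + m * s)), sub_self]
          exact integral_div_one_add_mul hm (sub_nonneg.2 ht.1)
  · calc ∫ s in t..b, m / (1 + m * |s - t|) = ∫ s in t..b, m / (1 + m * (s - t)) := by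
          refine intervalIntegral.integral_congr fun s hs => ?_
          rw [uIcc_of_le ht.2] at hs
          rw [abs_of_nonneg (by linarith [hs.1])]
      _ = log (1 + m * (b - t)) := by
          rw [intervalIntegral.integral_comp_sub_right (fun s => m / (1 + m * s)), sub_self]
          exact integral_div_one_add_mul hm (sub_nonneg.2 ht.2)

theorem log_one_add_mul_le_integral_div_one_add_mul_abs_sub {m a b t : ℝ} (hm : 0 ≤ m)
    (ht : t ∈ Icc a b) :
    log (1 + m * (b - a)) ≤ ∫ s in a..b, m / (1 + m * |s - t|) := by
  have hα : 0 ≤ m * (t - a) := mul_nonneg hm (sub_nonneg.2 ht.1)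
  have hβ : 0 ≤ m * (b - t) := mul_nonneg hm (sub_nonneg.2 ht.2)
  rw [integral_div_one_add_mul_abs_sub hm ht, ← log_mul (by positivity) (by positivity)]
  exact log_le_log (by nlinarith) (by nlinarith)

theorem velocity_bound_via_length_general {n : ℕ} {a b C : ℝ} (hab : a < b) (hC : 0 < C)
    (γ' γ'' : ℝ → EuclideanSpace ℝ (Fin n)) {K : NNReal}
    (hlip : LipschitzOnWith K γ' (Set.Icc a b))
    (hder2 : ∀ᵐ t ∂(volume.restrict (Set.Icc a b)),
      HasDerivAt γ' (γ'' t) t ∧ ‖γ'' t‖ ≤ C * ‖γ' t‖ ^ 2) :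
    ∀ t ∈ Set.Icc a b,
      ‖γ' t‖ ≤ (Real.exp (C * ∫ s in a..b, ‖γ' s‖) - 1) / (C * (b - a)) := by
  intro t ht
  set v : ℝ → ℝ := fun s => ‖γ' s‖
  have hv_lip : LipschitzOnWith K v (Icc a b) := by
    simpa [Function.comp_def] using lipschitzWith_one_norm.comp_lipschitzOnWith hlip
  have hv_deriv : ∀ᵐ s, s ∈ Icc a b → |deriv v s| ≤ C * v s ^ 2 := by
    filter_upwards [(ae_restrict_iff' measurableSet_Icc).1 hder2] with s hs hsI
    obtain ⟨hγ'', hbound⟩ := hs hsI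
    have hnorm := lipschitzWith_one_norm.norm_deriv_comp_le hγ''
    rw [NNReal.coe_one, one_mul, Real.norm_eq_abs] at hnorm
    exact hnorm.trans hbound
  have hlower : ∀ s ∈ Icc a b, C * v t / (1 + C * v t * |s - t|) ≤ C * v s := by
    intro s hs
    have hsub : uIcc t s ⊆ Icc a b := uIcc_subset_Icc ht hs
    have hcomp := le_mul_one_add_mul_of_abs_deriv_le_mul_sq hC.le (hv_lip.mono hsub)
      (fun u _ => norm_nonneg _) (hv_deriv.mono fun u hu hu' => hu (hsub hu'))
    rw [div_le_iff₀ (by positivity)]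
    nlinarith
  have hlog : log (1 + C * v t * (b - a)) ≤ C * ∫ s in a..b, v s := by
    calc log (1 + C * v t * (b - a)) ≤ ∫ s in a..b, C * v t / (1 + C * v t * |s - t|) :=
          log_one_add_mul_le_integral_div_one_add_mul_abs_sub (by positivity) ht
      _ ≤ ∫ s in a..b, C * v s := by
          refine intervalIntegral.integral_mono_on hab.le ?_ ?_ hlower
          · exact (continuous_const.div (by fun_prop) fun s => by positivity).intervalIntegrable _ _
          · exact (hv_lip.continuousOn.intervalIntegrable_of_Icc hab.le).const_mul C
      _ = C * ∫ s in a..b, v s := intervalIntegral.integral_const_mul _ _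
  rw [le_div_iff₀ (by nlinarith)]
  linarith [(log_le_iff_le_exp (by positivity)).1 hlog]

/-- If a `C^{1,1}` curve `γ : [a,b] → ℝ^n` satisfies `‖γ''‖ ≤ C‖γ'‖²` a.e., then
`‖γ'(t)‖ ≤ (e^{Cr} − 1)/(C(b−a))` for all `t`, where `r` is the Euclidean length. -/
theorem velocity_bound_via_length {n : ℕ} {a b C : ℝ} (hab : a < b) (hC : 0 < C)
    (γ γ' γ'' : ℝ → EuclideanSpace ℝ (Fin n)) {K : NNReal}
    (hder : ∀ t ∈ Set.Icc a b, HasDerivAt γ (γ' t) t)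
    (hlip : LipschitzOnWith K γ' (Set.Icc a b))
    (hder2 : ∀ᵐ t ∂(volume.restrict (Set.Icc a b)),
      HasDerivAt γ' (γ'' t) t ∧ ‖γ'' t‖ ≤ C * ‖γ' t‖ ^ 2) :
    ∀ t ∈ Set.Icc a b,
      ‖γ' t‖ ≤ (Real.exp (C * ∫ s in a..b, ‖γ' s‖) - 1) / (C * (b - a)) :=
  velocity_bound_via_length_general hab hC γ' γ'' hlip hder2
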